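/- Let y ∈ L¹(0,∞) and suppose x ∈ L¹(0,∞) is an extreme point of Ω(y) = {z ∈ L¹(0,∞) : z ≺ y}. If ∫₀ˢ μ(t;y₊) dt > ∫₀ˢ μ(t;x₊) dt for all s ∈ (t₁, t₂) with 0 ≤ t₁ < t₂ ≤ ∞, then for every s ∈ (t₁, t₂) the rearrangement μ(x₊) is constant on [s, s+ε) for some ε > 0; in particular μ(x₊) is a step function on [t₁, t₂). -/

import Mathlib

open MeasureTheory Set

/-- Decreasing rearrangement of `|f|` with respect to Lebesgue measure on `(0,∞)`. -/
noncomputable def rearr (f : ℝ → ℝ) (t : ℝ) : ℝ :=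
  sInf {s : ℝ | 0 ≤ s ∧ (volume.restrict (Set.Ioi (0:ℝ))) {x | s < |f x|} ≤ ENNReal.ofReal t}

/-- Positive part of a function. -/
noncomputable def posPart' (f : ℝ → ℝ) : ℝ → ℝ := fun t => max (f t) 0

/-- Negative part of a function. -/
noncomputable def negPart' (f : ℝ → ℝ) : ℝ → ℝ := fun t => max (-f t) 0

/-- Hardy–Littlewood–Pólya submajorization on `(0,∞)`. -/
def SubMaj (f g : ℝ → ℝ) : Prop :=
  ∀ t : ℝ, 0 ≤ t →
    (∫ s in Set.Ioc (0:ℝ) t, rearr f s) ≤ ∫ s in Set.Ioc (0:ℝ) t, rearr g s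

/-- Hardy–Littlewood–Pólya majorization on `(0,∞)`:
`f₊ ≺≺ g₊`, `f₋ ≺≺ g₋` and `∫ f = ∫ g`. -/
def Maj (f g : ℝ → ℝ) : Prop :=
  SubMaj (posPart' f) (posPart' g) ∧ SubMaj (negPart' f) (negPart' g) ∧
    (∫ t in Set.Ioi (0:ℝ), f t) = ∫ t in Set.Ioi (0:ℝ), g t

/-!
Suppose `μ(x₊)` is not constant on any right neighbourhood of some `s ∈ [t₁, t₂)`. Then it takes
strictly decreasing values `v₀ > v₁ > v₂ > v₃ > 0` at points `τ₀ < τ₁ < τ₂ < τ₃` just to the right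
of `s`, so the slab `{v₂ < x ≤ v₁}` has positive measure. Choose disjoint `U`, `V` in it of equal
small measure `m` and move height `η` from `U` to `V`, or from `V` to `U`: `x` is the midpoint of
the two results. By the layer-cake formula `∫₀ᵗ μ(g₊) = ∫₀^∞ min (d_g(a), t) da`, the transfer
does not change `∫₀ᵗ μ(·₊)` for `t ≤ τ₀` (only levels below `v₀` move) nor for `t ≥ τ₃ + m` (the
mass lowered on `U` is the mass raised on `V`), and raises it by at most `η m` in between, where
the strict inequality leaves room. Negative parts and integrals are unchanged, so both results lie
in `Ω(y)`, contradicting extremality.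
-/

open scoped ENNReal

local notation "μ₀" => volume.restrict (Ioi (0:ℝ))

noncomputable def distrib (g : ℝ → ℝ) (a : ℝ) : ℝ≥0∞ := μ₀ {t | a < g t}

section Rearrangement

variable {f : ℝ → ℝ} {a s t t' : ℝ}

lemma distrib_antitone (g : ℝ → ℝ) : Antitone (distrib g) :=
  fun _ _ hab => measure_mono fun _ ht => hab.trans_lt ht

lemma distrib_congr_ae {g : ℝ → ℝ} (h : f =ᵐ[μ₀] g) : distrib f = distrib g := by
  funext a
  refine measure_congr (h.mono fun t ht => ?_)
  change (a < f t) = (a < g t)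
  rw [ht]

lemma rearr_eq_sInf (f : ℝ → ℝ) (t : ℝ) :
    rearr f t = sInf {s | 0 ≤ s ∧ distrib (fun u => |f u|) s ≤ ENNReal.ofReal t} := rfl

lemma rearr_congr_ae {g : ℝ → ℝ} (h : f =ᵐ[μ₀] g) : rearr f = rearr g := by
  have : (fun u => |f u|) =ᵐ[μ₀] fun u => |g u| := h.mono fun t ht => by simp only [ht]
  funext t
  rw [rearr_eq_sInf, rearr_eq_sInf, distrib_congr_ae this]

lemma rearr_nonneg (f : ℝ → ℝ) (t : ℝ) : 0 ≤ rearr f t :=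
  Real.sInf_nonneg fun _ hs => hs.1

lemma rearr_le_of_distrib_le (ha : 0 ≤ a)
    (h : distrib (fun u => |f u|) a ≤ ENNReal.ofReal t) : rearr f t ≤ a :=
  csInf_le ⟨0, fun _ hs => hs.1⟩ ⟨ha, h⟩

lemma rearr_le_rearr_of_distrib_le (ha : 0 ≤ a)
    (h : distrib (fun u => |f u|) a ≤ ENNReal.ofReal t) (htt' : t ≤ t') :
    rearr f t' ≤ rearr f t :=
  csInf_le_csInf ⟨0, fun _ hs => hs.1⟩ ⟨a, ha, h⟩
    fun _ hs => ⟨hs.1, hs.2.trans (ENNReal.ofReal_le_ofReal htt')⟩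

-- Markov's inequality, with `a` chosen so that `‖f‖₁ / a ≤ t`.
lemma exists_distrib_le (hf : Integrable f μ₀) (ht : 0 < t) :
    ∃ a, 0 ≤ a ∧ distrib (fun u => |f u|) a ≤ ENNReal.ofReal t := by
  set C := ∫⁻ u, ENNReal.ofReal |f u| ∂μ₀
  have hC : C ≠ ⊤ := hf.abs.lintegral_lt_top.ne
  set a := C.toReal / t + 1
  have ha : 0 < a := by positivity
  refine ⟨a, ha.le, ?_⟩
  calc distrib (fun u => |f u|) a
      ≤ μ₀ {u | ENNReal.ofReal a ≤ ENNReal.ofReal |f u|} :=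
        measure_mono fun u hu => ENNReal.ofReal_le_ofReal (le_of_lt hu)
    _ ≤ C / ENNReal.ofReal a :=
        meas_ge_le_lintegral_div hf.abs.aemeasurable.ennreal_ofReal (by simp [ha])
          ENNReal.ofReal_ne_top
    _ ≤ ENNReal.ofReal t := by
        rw [ENNReal.div_le_iff (by simp [ha]) ENNReal.ofReal_ne_top,
          ← ENNReal.ofReal_mul ht.le, ← ENNReal.ofReal_toReal hC]
        refine ENNReal.ofReal_le_ofReal ?_
        rw [mul_add, mul_div_cancel₀ _ ht.ne', mul_one]
        linarith

-- `distrib` is right-continuous, so the infimum defining `rearr` is attained.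
lemma distrib_rearr_le (hf : Integrable f μ₀) (ht : 0 < t) :
    distrib (fun u => |f u|) (rearr f t) ≤ ENNReal.ofReal t := by
  set S := {s | 0 ≤ s ∧ distrib (fun u => |f u|) s ≤ ENNReal.ofReal t}
  obtain ⟨a, ha⟩ := exists_distrib_le hf ht
  obtain ⟨v, hv_anti, hv_lim, hvS⟩ :=
    exists_seq_tendsto_sInf (S := S) ⟨a, ha⟩ ⟨0, fun _ hs => hs.1⟩
  have hunion : {u | rearr f t < |f u|} = ⋃ n, {u | v n < |f u|} := by
    ext u
    simp only [mem_ofPred_eq, mem_iUnion]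
    refine ⟨fun hu => (hv_lim.eventually (gt_mem_nhds hu)).exists, ?_⟩
    rintro ⟨n, hn⟩
    exact (csInf_le ⟨0, fun _ hs => hs.1⟩ (hvS n)).trans_lt hn
  have hmono : Monotone fun n => {u | v n < |f u|} :=
    fun _ _ hnm _ hu => (hv_anti hnm).trans_lt hu
  change μ₀ _ ≤ _
  rw [hunion, hmono.measure_iUnion]
  exact iSup_le fun n => (hvS n).2

lemma lt_rearr_iff (hf : Integrable f μ₀) (ht : 0 < t) (ha : 0 ≤ a) :
    a < rearr f t ↔ ENNReal.ofReal t < distrib (fun u => |f u|) a := by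
  refine ⟨fun h => ?_, fun h => ?_⟩
  · by_contra! hd
    exact (rearr_le_of_distrib_le ha hd).not_gt h
  · by_contra! hr
    exact ((distrib_antitone _ hr).trans (distrib_rearr_le hf ht)).not_gt h

lemma rearr_le_iff (hf : Integrable f μ₀) (ht : 0 < t) (ha : 0 ≤ a) :
    rearr f t ≤ a ↔ distrib (fun u => |f u|) a ≤ ENNReal.ofReal t := by
  rw [← not_lt, lt_rearr_iff hf ht ha, not_lt]

lemma rearr_antitoneOn (hf : Integrable f μ₀) : AntitoneOn (rearr f) (Ioi 0) := by
  intro t ht t' _ htt'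
  obtain ⟨a, ha, hd⟩ := exists_distrib_le hf ht
  exact rearr_le_rearr_of_distrib_le ha hd htt'

-- Otherwise `distrib (rearr f b) ≤ s` by right-continuity, and `rearr f` is constant on `[s, b)`.
lemma exists_rearr_lt_rearr (hf : Integrable f μ₀) (hs : 0 ≤ s) {b : ℝ} (hsb : s < b)
    (hconst : ∀ ε, 0 < ε → ∃ u ∈ Ico s (s + ε), rearr f u ≠ rearr f s) :
    ∃ u ∈ Ioo s b, rearr f b < rearr f u := by
  by_contra! h
  set w := rearr f b
  have hw : 0 ≤ w := rearr_nonneg f b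
  have hdw : distrib (fun u => |f u|) w ≤ ENNReal.ofReal s := by
    refine ge_of_tendsto (ENNReal.continuous_ofReal.continuousWithinAt (s := Ioi s)).tendsto ?_
    filter_upwards [Ioo_mem_nhdsGT hsb] with u hu
    exact (rearr_le_iff hf (hs.trans_lt hu.1) hw).1 (h u hu)
  obtain ⟨u, hu, hne⟩ := hconst (b - s) (by linarith)
  have hwu : w ≤ rearr f u := rearr_le_rearr_of_distrib_le hw
    (hdw.trans (ENNReal.ofReal_le_ofReal hu.1)) (by linarith [hu.2])
  have hus : rearr f u ≤ rearr f s := rearr_le_rearr_of_distrib_le hw hdw hu.1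
  exact hne (le_antisymm hus ((rearr_le_of_distrib_le hw hdw).trans hwu))

lemma exists_rearr_chain (hf : Integrable f μ₀) (hs : 0 ≤ s) {T : ℝ} (hsT : s < T)
    (hconst : ∀ ε, 0 < ε → ∃ u ∈ Ico s (s + ε), rearr f u ≠ rearr f s) :
    ∃ τ₀ τ₁ τ₂ τ₃, s < τ₀ ∧ τ₀ < τ₁ ∧ τ₁ < τ₂ ∧ τ₂ < τ₃ ∧ τ₃ < T ∧ 0 < rearr f τ₃ ∧
      rearr f τ₃ < rearr f τ₂ ∧ rearr f τ₂ < rearr f τ₁ ∧ rearr f τ₁ < rearr f τ₀ := by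
  obtain ⟨τ₃, ⟨hsτ₃, hτ₃T⟩, hr₃⟩ := exists_rearr_lt_rearr hf hs hsT hconst
  obtain ⟨τ₂, ⟨hsτ₂, hτ₂₃⟩, hr₂⟩ := exists_rearr_lt_rearr hf hs hsτ₃ hconst
  obtain ⟨τ₁, ⟨hsτ₁, hτ₁₂⟩, hr₁⟩ := exists_rearr_lt_rearr hf hs hsτ₂ hconst
  obtain ⟨τ₀, ⟨hsτ₀, hτ₀₁⟩, hr₀⟩ := exists_rearr_lt_rearr hf hs hsτ₁ hconst
  exact ⟨τ₀, τ₁, τ₂, τ₃, hsτ₀, hτ₀₁, hτ₁₂, hτ₂₃, hτ₃T, (rearr_nonneg f T).trans_lt hr₃,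
    hr₂, hr₁, hr₀⟩

lemma volume_setOf_ofReal_lt_inter_Ioc (d : ℝ≥0∞) (T : ℝ) :
    volume ({s | ENNReal.ofReal s < d} ∩ Ioc 0 T) = min d (ENNReal.ofReal T) := by
  rcases eq_or_ne d ⊤ with rfl | hd
  · simp
  obtain ⟨D, hD, rfl⟩ : ∃ D, 0 ≤ D ∧ d = ENNReal.ofReal D := ⟨d.toReal, by simp, by simp [hd]⟩
  have hsub : Ioo 0 (min D T) ⊆ {s | ENNReal.ofReal s < ENNReal.ofReal D} ∩ Ioc 0 T :=
    fun s hs => ⟨(ENNReal.ofReal_lt_ofReal_iff_of_nonneg hs.1.le).2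
      (hs.2.trans_le (min_le_left _ _)), hs.1, hs.2.le.trans (min_le_right _ _)⟩
  have hsup : {s | ENNReal.ofReal s < ENNReal.ofReal D} ∩ Ioc 0 T ⊆ Ioc 0 (min D T) :=
    fun s hs => ⟨hs.2.1, le_min (ENNReal.ofReal_lt_ofReal_iff'.1 hs.1).1.le hs.2.2⟩
  refine le_antisymm ((measure_mono hsup).trans ?_) ((measure_mono hsub).trans' ?_) <;>
    simp [Real.volume_Ioc, Real.volume_Ioo]

lemma measure_lt_rearr (hf : Integrable f μ₀) (T : ℝ) (ha : 0 ≤ a) :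
    volume.restrict (Ioc 0 T) {s | a < rearr f s} =
      min (distrib (fun u => |f u|) a) (ENNReal.ofReal T) := by
  rw [Measure.restrict_apply' measurableSet_Ioc,
    ← volume_setOf_ofReal_lt_inter_Ioc]
  congr 1
  ext s
  simp only [mem_inter_iff, mem_ofPred_eq]
  exact and_congr_left fun hs => lt_rearr_iff hf hs.1 ha

lemma aemeasurable_rearr (hf : Integrable f μ₀) (T : ℝ) :
    AEMeasurable (rearr f) (volume.restrict (Ioc 0 T)) :=
  aemeasurable_restrict_of_antitoneOn measurableSet_Ioc
    ((rearr_antitoneOn hf).mono Ioc_subset_Ioi_self)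

lemma lintegral_rearr (hf : Integrable f μ₀) (T : ℝ) :
    ∫⁻ s in Ioc 0 T, ENNReal.ofReal (rearr f s) =
      ∫⁻ a in Ioi 0, min (distrib (fun u => |f u|) a) (ENNReal.ofReal T) := by
  rw [lintegral_eq_lintegral_meas_lt _ (ae_of_all _ (rearr_nonneg f)) (aemeasurable_rearr hf T)]
  exact setLIntegral_congr_fun measurableSet_Ioi fun a ha => measure_lt_rearr hf T (le_of_lt ha)

lemma lintegral_min_distrib_lt_top (hf : Integrable f μ₀) (c : ℝ≥0∞) :
    ∫⁻ a in Ioi 0, min (distrib (fun u => |f u|) a) c < ⊤ := by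
  refine (lintegral_mono fun a => min_le_left _ c).trans_lt ?_
  simp only [distrib]
  rw [← lintegral_eq_lintegral_meas_lt _ (ae_of_all _ fun u => abs_nonneg (f u))
    hf.abs.aemeasurable]
  exact hf.abs.lintegral_lt_top

lemma integrableOn_rearr (hf : Integrable f μ₀) (T : ℝ) :
    IntegrableOn (rearr f) (Ioc 0 T) := by
  refine (lintegral_ofReal_ne_top_iff_integrable (aemeasurable_rearr hf T).aestronglyMeasurable
    (ae_of_all _ (rearr_nonneg f))).1 ?_
  rw [lintegral_rearr hf T]
  exact (lintegral_min_distrib_lt_top hf _).ne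

lemma ofReal_integral_rearr (hf : Integrable f μ₀) (T : ℝ) :
    ENNReal.ofReal (∫ s in Ioc 0 T, rearr f s) =
      ∫⁻ a in Ioi 0, min (distrib (fun u => |f u|) a) (ENNReal.ofReal T) := by
  rw [ofReal_integral_eq_lintegral_ofReal (integrableOn_rearr hf T)
    (ae_of_all _ (rearr_nonneg f)), lintegral_rearr hf T]

lemma continuousOn_integral_rearr (hf : Integrable f μ₀) {T : ℝ} (hT : 0 ≤ T) :
    ContinuousOn (fun t => ∫ s in Ioc 0 t, rearr f s) (Icc 0 T) := by
  have hint : IntervalIntegrable (rearr f) volume 0 T :=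
    (intervalIntegrable_iff_integrableOn_Ioc_of_le hT).2 (integrableOn_rearr hf T)
  have := intervalIntegral.continuousOn_primitive_interval' hint (left_mem_uIcc)
  rw [uIcc_of_le hT] at this
  exact this.congr fun t ht => (intervalIntegral.integral_of_le ht.1).symm

end Rearrangement

lemma subMaj_iff {f g : ℝ → ℝ} (hf : Integrable f μ₀) (hg : Integrable g μ₀) :
    SubMaj f g ↔ ∀ T, 0 ≤ T →
      ∫⁻ a in Ioi 0, min (distrib (fun u => |f u|) a) (ENNReal.ofReal T) ≤
        ∫⁻ a in Ioi 0, min (distrib (fun u => |g u|) a) (ENNReal.ofReal T) := by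
  refine forall₂_congr fun T _ => ?_
  rw [← ofReal_integral_rearr hf T, ← ofReal_integral_rearr hg T, ENNReal.ofReal_le_ofReal_iff
    (setIntegral_nonneg measurableSet_Ioc fun s _ => rearr_nonneg g s)]

lemma distrib_abs_posPart' (x : ℝ → ℝ) {a : ℝ} (ha : 0 ≤ a) :
    distrib (fun u => |posPart' x u|) a = distrib x a := by
  simp only [distrib]
  congr 1
  ext t
  simp only [mem_ofPred_eq, posPart']
  rw [abs_of_nonneg (le_max_right _ _), lt_max_iff]
  exact or_iff_left ha.not_gt

lemma lintegral_min_distrib_abs_posPart' (x : ℝ → ℝ) (c : ℝ≥0∞) :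
    ∫⁻ a in Ioi 0, min (distrib (fun u => |posPart' x u|) a) c =
      ∫⁻ a in Ioi 0, min (distrib x a) c :=
  setLIntegral_congr_fun measurableSet_Ioi fun a ha => by
    rw [distrib_abs_posPart' x (le_of_lt ha)]

section Band

variable {φ ψ : ℝ → ℝ} {U : Set ℝ}

lemma measurableSet_band (hφ : Measurable φ) (hψ : Measurable ψ) (hU : MeasurableSet U) :
    MeasurableSet {p : ℝ × ℝ | p.2 ∈ U ∧ p.1 ∈ Ico (φ p.2) (ψ p.2)} :=
  (hU.preimage measurable_snd).inter
    ((measurableSet_le (hφ.comp measurable_snd) measurable_fst).inter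
      (measurableSet_lt measurable_fst (hψ.comp measurable_snd)))

lemma measurableSet_inter_band (hφ : Measurable φ) (hψ : Measurable ψ) (hU : MeasurableSet U)
    (a : ℝ) : MeasurableSet (U ∩ {t | a ∈ Ico (φ t) (ψ t)}) :=
  (measurableSet_band hφ hψ hU).preimage measurable_prodMk_left

lemma measurable_measure_band (hφ : Measurable φ) (hψ : Measurable ψ) (hU : MeasurableSet U) :
    Measurable fun a => μ₀ (U ∩ {t | a ∈ Ico (φ t) (ψ t)}) :=
  measurable_measure_prodMk_left (measurableSet_band hφ hψ hU)

lemma lintegral_measure_band (hφ : Measurable φ) (hψ : Measurable ψ) (hU : MeasurableSet U)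
    (hφpos : ∀ t ∈ U, 0 < φ t) :
    ∫⁻ a in Ioi 0, μ₀ (U ∩ {t | a ∈ Ico (φ t) (ψ t)}) =
      ∫⁻ t in U, ENNReal.ofReal (ψ t - φ t) ∂μ₀ := by
  have hW := measurableSet_band hφ hψ hU
  have hsection : ∀ t, μ₀ ((·, t) ⁻¹' {p : ℝ × ℝ | p.2 ∈ U ∧ p.1 ∈ Ico (φ p.2) (ψ p.2)}) =
      U.indicator (fun t => ENNReal.ofReal (ψ t - φ t)) t := by
    intro t
    by_cases ht : t ∈ U
    · have hsub : Ico (φ t) (ψ t) ⊆ Ioi 0 := fun a ha => (hφpos t ht).trans_le ha.1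
      simp only [preimage_ofPred_eq, ht, true_and, indicator_of_mem, ofPred_mem_eq]
      rw [Measure.restrict_apply' measurableSet_Ioi, inter_eq_self_of_subset_left hsub,
        Real.volume_Ico]
    · simp [ht]
  rw [← lintegral_indicator hU, ← lintegral_congr hsection, ← Measure.prod_apply_symm hW,
    Measure.prod_apply hW]
  rfl

end Band

noncomputable def transfer (x : ℝ → ℝ) (U V : Set ℝ) (η : ℝ) : ℝ → ℝ :=
  x + V.indicator (fun _ => η) - U.indicator (fun _ => η)

section Transfer

variable {x : ℝ → ℝ} {U V : Set ℝ} {η a t : ℝ}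

lemma transfer_of_mem_left (hUV : Disjoint U V) (ht : t ∈ U) : transfer x U V η t = x t - η := by
  simp [transfer, ht, hUV.notMem_of_mem_left ht]

lemma transfer_of_mem_right (hUV : Disjoint U V) (ht : t ∈ V) :
    transfer x U V η t = x t + η := by
  simp [transfer, ht, hUV.notMem_of_mem_right ht]

lemma transfer_of_notMem (htU : t ∉ U) (htV : t ∉ V) : transfer x U V η t = x t := by
  simp [transfer, htU, htV]

lemma transfer_add_transfer (x : ℝ → ℝ) (U V : Set ℝ) (η t : ℝ) :
    transfer x U V η t + transfer x V U η t = 2 * x t := by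
  simp only [transfer, Pi.add_apply, Pi.sub_apply]
  ring

lemma sub_le_transfer (hUV : Disjoint U V) (hη : 0 ≤ η) (t : ℝ) :
    x t - η ≤ transfer x U V η t := by
  by_cases htU : t ∈ U
  · rw [transfer_of_mem_left hUV htU]
  by_cases htV : t ∈ V
  · rw [transfer_of_mem_right hUV htV]; linarith
  · rw [transfer_of_notMem htU htV]; linarith

lemma MeasureTheory.Integrable.transfer (hx : Integrable x μ₀) (hU : MeasurableSet U)
    (hV : MeasurableSet V) (hUfin : μ₀ U ≠ ⊤) (hVfin : μ₀ V ≠ ⊤) :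
    Integrable (transfer x U V η) μ₀ :=
  (hx.add ((integrableOn_const hVfin).integrable_indicator hV)).sub
    ((integrableOn_const hUfin).integrable_indicator hU)

lemma integral_transfer (hx : Integrable x μ₀) (hU : MeasurableSet U) (hV : MeasurableSet V)
    (hUV : μ₀ U = μ₀ V) (hVfin : μ₀ V ≠ ⊤) :
    ∫ t in Ioi 0, transfer x U V η t = ∫ t in Ioi 0, x t := by
  have hVη := (integrableOn_const (C := η) hVfin).integrable_indicator hV
  have hUη := (integrableOn_const (C := η) (hUV ▸ hVfin)).integrable_indicator hU
  simp only [transfer]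
  rw [integral_sub' (hx.add hVη) hUη, integral_add' hx hVη,
    integral_indicator_const _ hU, integral_indicator_const _ hV, measureReal_def,
    measureReal_def, hUV, add_sub_cancel_right]

lemma negPart'_transfer (hUV : Disjoint U V) (hη : 0 ≤ η) (hU : ∀ t ∈ U, η ≤ x t)
    (hV : ∀ t ∈ V, 0 ≤ x t) :
    negPart' (transfer x U V η) = negPart' x := by
  funext t
  simp only [negPart']
  by_cases htU : t ∈ U
  · rw [transfer_of_mem_left hUV htU]
    have := hU t htU
    rw [max_eq_right (by linarith), max_eq_right (by linarith)]
  by_cases htV : t ∈ V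
  · rw [transfer_of_mem_right hUV htV]
    have := hV t htV
    rw [max_eq_right (by linarith), max_eq_right (by linarith)]
  · rw [transfer_of_notMem htU htV]

lemma distrib_transfer_add (hx : Measurable x) (hU : MeasurableSet U) (hV : MeasurableSet V)
    (hUV : Disjoint U V) (hη : 0 ≤ η) (a : ℝ) :
    distrib (transfer x U V η) a + μ₀ (U ∩ {t | a ∈ Ico (x t - η) (x t)}) =
      distrib x a + μ₀ (V ∩ {t | a ∈ Ico (x t) (x t + η)}) := by
  have hunion : {t | a < transfer x U V η t} ∪ (U ∩ {t | a ∈ Ico (x t - η) (x t)}) =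
      {t | a < x t} ∪ (V ∩ {t | a ∈ Ico (x t) (x t + η)}) := by
    ext t
    simp only [mem_union, mem_inter_iff, mem_ofPred_eq, mem_Ico]
    by_cases htU : t ∈ U
    · have htV := hUV.notMem_of_mem_left htU
      simp only [transfer_of_mem_left hUV htU, htU, htV, true_and, false_and, or_false]
      constructor
      · rintro (h | h)
        exacts [by linarith, h.2]
      · intro h
        exact (lt_or_ge a (x t - η)).imp_right fun h' => ⟨h', h⟩
    by_cases htV : t ∈ V
    · simp only [transfer_of_mem_right hUV htV, htU, htV, true_and, false_and, or_false]
      constructor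
      · intro h
        exact (lt_or_ge a (x t)).imp_right fun h' => ⟨h', h⟩
      · rintro (h | h)
        exacts [by linarith, h.2]
    · simp [transfer_of_notMem htU htV, htU, htV]
  have h₁ := measure_union (μ := μ₀) (s₁ := {t | a < transfer x U V η t})
    (disjoint_left.2 fun t ht ht' => by
      rw [mem_ofPred_eq, transfer_of_mem_left hUV ht'.1] at ht
      exact ht'.2.1.not_gt ht)
    (measurableSet_inter_band (hx.sub_const η) hx hU a)
  have h₂ := measure_union (μ := μ₀) (s₁ := {t | a < x t})
    (disjoint_left.2 fun t ht ht' => ht'.2.1.not_gt ht)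
    (measurableSet_inter_band hx (hx.add_const η) hV a)
  rw [distrib, distrib, ← h₁, ← h₂, hunion]

lemma distrib_transfer_le (hx : Measurable x) (hU : MeasurableSet U) (hV : MeasurableSet V)
    (hUV : Disjoint U V) (hη : 0 ≤ η) (a : ℝ) :
    distrib (transfer x U V η) a ≤ distrib x a + μ₀ (V ∩ {t | a ∈ Ico (x t) (x t + η)}) :=
  le_self_add.trans (distrib_transfer_add hx hU hV hUV hη a).le

lemma distrib_add_le_distrib_transfer (hUV : Disjoint U V) (hη : 0 ≤ η) (a : ℝ) :
    distrib x (a + η) ≤ distrib (transfer x U V η) a :=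
  measure_mono fun t ht => by
    have := sub_le_transfer (x := x) hUV hη t
    simp only [mem_ofPred_eq] at ht ⊢
    linarith

lemma lintegral_min_distrib_transfer_le_of_le (hUV : Disjoint U V) (hη : 0 ≤ η) {γ : ℝ}
    (hV : ∀ t ∈ V, x t + 2 * η ≤ γ) {c : ℝ≥0∞} (hc : ∀ a < γ, c ≤ distrib x a) :
    ∫⁻ a in Ioi 0, min (distrib (transfer x U V η) a) c ≤
      ∫⁻ a in Ioi 0, min (distrib x a) c := by
  refine lintegral_mono fun a => ?_
  rcases lt_or_ge (a + η) γ with ha | ha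
  · have hca : c ≤ distrib x (a + η) := hc _ ha
    rw [min_eq_right (hca.trans (distrib_add_le_distrib_transfer hUV hη a)),
      min_eq_right (hca.trans (distrib_antitone x (by linarith)))]
  · -- above `γ - η` the transfer can only lower the superlevel set
    refine min_le_min_right c (measure_mono fun t ht => ?_)
    simp only [mem_ofPred_eq] at ht ⊢
    by_cases htU : t ∈ U
    · rw [transfer_of_mem_left hUV htU] at ht; linarith
    by_cases htV : t ∈ V
    · rw [transfer_of_mem_right hUV htV] at ht; linarith [hV t htV]
    · rwa [transfer_of_notMem htU htV] at ht

lemma lintegral_min_distrib_transfer_le_add (hx : Measurable x) (hU : MeasurableSet U)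
    (hV : MeasurableSet V) (hUV : Disjoint U V) (hη : 0 ≤ η) (hVpos : ∀ t ∈ V, 0 < x t)
    (c : ℝ≥0∞) :
    ∫⁻ a in Ioi 0, min (distrib (transfer x U V η) a) c ≤
      (∫⁻ a in Ioi 0, min (distrib x a) c) + ENNReal.ofReal η * μ₀ V := by
  calc ∫⁻ a in Ioi 0, min (distrib (transfer x U V η) a) c
      ≤ ∫⁻ a in Ioi 0, (min (distrib x a) c + μ₀ (V ∩ {t | a ∈ Ico (x t) (x t + η)})) :=
        lintegral_mono fun a => by
          rcases le_total (distrib x a) c with h | h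
          · exact (min_le_left _ _).trans <| (distrib_transfer_le hx hU hV hUV hη a).trans <|
              by rw [min_eq_left h]
          · exact (min_le_right _ _).trans <| by rw [min_eq_right h]; exact le_self_add
    _ = (∫⁻ a in Ioi 0, min (distrib x a) c) + ENNReal.ofReal η * μ₀ V := by
        rw [lintegral_add_right _ (measurable_measure_band hx (hx.add_const η) hV),
          lintegral_measure_band hx (hx.add_const η) hV hVpos]
        simp only [add_sub_cancel_left, setLIntegral_const]

lemma lintegral_min_distrib_transfer_eq (hx : Measurable x) (hU : MeasurableSet U)
    (hV : MeasurableSet V) (hUV : Disjoint U V) (hη : 0 ≤ η) {β : ℝ} (hβ : 0 ≤ β)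
    (hUβ : ∀ t ∈ U, β + η < x t) (hVβ : ∀ t ∈ V, β < x t) (hUV_eq : μ₀ U = μ₀ V)
    (hVfin : μ₀ V ≠ ⊤) {c : ℝ≥0∞} (hc : distrib x β + μ₀ V ≤ c) :
    ∫⁻ a in Ioi 0, min (distrib (transfer x U V η) a) c =
      ∫⁻ a in Ioi 0, min (distrib x a) c := by
  have hpoint : ∀ a, min (distrib (transfer x U V η) a) c +
      μ₀ (U ∩ {t | a ∈ Ico (x t - η) (x t)}) =
      min (distrib x a) c + μ₀ (V ∩ {t | a ∈ Ico (x t) (x t + η)}) := by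
    intro a
    have hid := distrib_transfer_add hx hU hV hUV hη a
    rcases le_or_gt a β with ha | ha
    · have hU0 : U ∩ {t | a ∈ Ico (x t - η) (x t)} = ∅ :=
        eq_empty_of_forall_notMem fun t ht => by linarith [hUβ t ht.1, ht.2.1]
      have hV0 : V ∩ {t | a ∈ Ico (x t) (x t + η)} = ∅ :=
        eq_empty_of_forall_notMem fun t ht => by linarith [hVβ t ht.1, ht.2.1]
      rw [hU0, hV0, measure_empty, add_zero, add_zero] at hid ⊢
      rw [hid]
    · have hxa : distrib x a ≤ distrib x β := distrib_antitone x ha.le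
      have hga : distrib (transfer x U V η) a ≤ c :=
        (distrib_transfer_le hx hU hV hUV hη a).trans
          ((add_le_add hxa (measure_mono inter_subset_left)).trans hc)
      rwa [min_eq_left hga, min_eq_left (hxa.trans (le_self_add.trans hc))]
  have hsum := lintegral_congr (μ := volume.restrict (Ioi 0)) hpoint
  rw [lintegral_add_right _ (measurable_measure_band (hx.sub_const η) hx hU),
    lintegral_add_right _ (measurable_measure_band hx (hx.add_const η) hV),
    lintegral_measure_band (hx.sub_const η) hx hU fun t ht => by linarith [hUβ t ht],
    lintegral_measure_band hx (hx.add_const η) hV fun t ht => by linarith [hVβ t ht]] at hsum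
  simp only [sub_sub_cancel, add_sub_cancel_left, setLIntegral_const, hUV_eq] at hsum
  exact (ENNReal.add_left_inj (ENNReal.mul_ne_top ENNReal.ofReal_ne_top hVfin)).1 hsum

end Transfer

lemma exists_subset_measure_eq {S : Set ℝ} (hS : MeasurableSet S) {m : ℝ} (hm : 0 ≤ m)
    (hmS : ENNReal.ofReal m < μ₀ S) :
    ∃ S' ⊆ S, MeasurableSet S' ∧ μ₀ S' = ENNReal.ofReal m := by
  have hfin : ∀ r, μ₀ (S ∩ Iio r) ≠ ⊤ := fun r => by
    refine ne_top_of_le_ne_top ?_ (measure_mono inter_subset_right)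
    rw [Measure.restrict_apply' measurableSet_Ioi, Iio_inter_Ioi, Real.volume_Ioo]
    exact ENNReal.ofReal_ne_top
  set φ : ℝ → ℝ := fun r => (μ₀ (S ∩ Iio r)).toReal
  have hmono : Monotone φ := fun r r' h =>
    ENNReal.toReal_mono (hfin r') (measure_mono (inter_subset_inter_right _ (Iio_subset_Iio h)))
  have hcont : Continuous φ := by
    refine (LipschitzWith.of_le_add fun r' r => ?_).continuous
    rcases le_total r' r with h | h
    · exact (hmono h).trans (le_add_of_nonneg_right dist_nonneg)
    have hsub : S ∩ Iio r' ⊆ (S ∩ Iio r) ∪ Ico r r' := fun u hu =>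
      (lt_or_ge u r).imp (fun h => ⟨hu.1, h⟩) fun h => ⟨h, hu.2⟩
    have hle : μ₀ (S ∩ Iio r') ≤ μ₀ (S ∩ Iio r) + ENNReal.ofReal (r' - r) :=
      (measure_mono hsub).trans <| (measure_union_le _ _).trans <| add_le_add le_rfl
        ((Measure.restrict_apply_le _ _).trans Real.volume_Ico.le)
    have := ENNReal.toReal_mono (ENNReal.add_ne_top.2 ⟨hfin r, ENNReal.ofReal_ne_top⟩) hle
    rw [ENNReal.toReal_add (hfin r) ENNReal.ofReal_ne_top, ENNReal.toReal_ofReal (by linarith)]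
      at this
    rw [Real.dist_eq, abs_of_nonneg (by linarith)]
    exact this
  have hφ0 : φ 0 = 0 := by
    simp only [φ, Measure.restrict_apply' measurableSet_Ioi, inter_assoc, Iio_inter_Ioi,
      Ioo_self, inter_empty, measure_empty, ENNReal.toReal_zero]
  obtain ⟨R, hR⟩ : ∃ R : ℝ, m < φ R := by
    have hunion : ⋃ n : ℕ, S ∩ Iio (n : ℝ) = S :=
      Subset.antisymm (iUnion_subset fun _ => inter_subset_left) fun u hu =>
        mem_iUnion.2 ((exists_nat_gt u).imp fun _ h => ⟨hu, h⟩)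
    have hmono' : Monotone fun n : ℕ => S ∩ Iio (n : ℝ) := fun n n' h =>
      inter_subset_inter_right _ (Iio_subset_Iio (Nat.cast_le.2 h))
    rw [← hunion, hmono'.measure_iUnion] at hmS
    obtain ⟨n, hn⟩ := lt_iSup_iff.1 hmS
    exact ⟨n, (ENNReal.ofReal_lt_iff_lt_toReal hm (hfin n)).1 hn⟩
  have hR0 : 0 ≤ R := hmono.reflect_lt (by rw [hφ0]; exact hm.trans_lt hR) |>.le
  obtain ⟨r, -, hr⟩ := intermediate_value_Icc hR0 hcont.continuousOn
    (show m ∈ Icc (φ 0) (φ R) from ⟨by rw [hφ0]; exact hm, hR.le⟩)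
  refine ⟨S ∩ Iio r, inter_subset_left, hS.inter measurableSet_Iio, ?_⟩
  rw [← hr, ENNReal.ofReal_toReal (hfin r)]

lemma exists_disjoint_subsets_measure_eq {S : Set ℝ} (hS : MeasurableSet S) (hSpos : 0 < μ₀ S)
    {ε : ℝ} (hε : 0 < ε) :
    ∃ m ∈ Ioo 0 ε, ∃ U ⊆ S, ∃ V ⊆ S, MeasurableSet U ∧ MeasurableSet V ∧ Disjoint U V ∧
      μ₀ U = ENNReal.ofReal m ∧ μ₀ V = ENNReal.ofReal m := by
  obtain ⟨ρ, -, hρ, hρS⟩ := ENNReal.lt_iff_exists_real_btwn.1 hSpos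
  have hρpos : 0 < ρ := ENNReal.ofReal_pos.1 hρ
  set m := min (ρ / 2) (ε / 2)
  have hm : 0 < m := lt_min (by linarith) (by linarith)
  have h2m : ENNReal.ofReal m + ENNReal.ofReal m < μ₀ S := by
    rw [← ENNReal.ofReal_add hm.le hm.le]
    exact (ENNReal.ofReal_le_ofReal (by linarith [min_le_left (ρ / 2) (ε / 2)])).trans_lt hρS
  obtain ⟨U, hUS, hU, hUm⟩ := exists_subset_measure_eq hS hm.le (le_self_add.trans_lt h2m)
  have hdiff : ENNReal.ofReal m < μ₀ (S \ U) := by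
    rw [measure_sdiff hUS hU.nullMeasurableSet (hUm ▸ ENNReal.ofReal_ne_top), hUm]
    exact (ENNReal.cancel_of_ne ENNReal.ofReal_ne_top).lt_tsub_iff_right.2 h2m
  obtain ⟨V, hVS, hV, hVm⟩ := exists_subset_measure_eq (hS.diff hU) hm.le hdiff
  exact ⟨m, ⟨hm, by linarith [min_le_right (ρ / 2) (ε / 2)]⟩, U, hUS, V, hVS.trans sdiff_subset,
    hU, hV, disjoint_left.2 fun _ hu hv => (hVS hv).2 hu, hUm, hVm⟩

lemma MeasureTheory.Integrable.posPart' {x : ℝ → ℝ} {μ : Measure ℝ} (hx : Integrable x μ) :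
    Integrable (posPart' x) μ :=
  hx.pos_part

section PosPart

variable {x : ℝ → ℝ} {a t : ℝ}

lemma lt_rearr_posPart'_iff (hx : Integrable x μ₀) (ht : 0 < t) (ha : 0 ≤ a) :
    a < rearr (posPart' x) t ↔ ENNReal.ofReal t < distrib x a := by
  rw [lt_rearr_iff hx.posPart' ht ha, distrib_abs_posPart' x ha]

lemma distrib_rearr_posPart'_le (hx : Integrable x μ₀) (ht : 0 < t) :
    distrib x (rearr (posPart' x) t) ≤ ENNReal.ofReal t := by
  rw [← distrib_abs_posPart' x (rearr_nonneg _ _)]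
  exact distrib_rearr_le hx.posPart' ht

lemma rearr_posPart'_congr_ae {x' : ℝ → ℝ} (h : x =ᵐ[μ₀] x') :
    rearr (posPart' x) = rearr (posPart' x') :=
  rearr_congr_ae (h.mono fun t ht => by simp only [posPart', ht])

end PosPart

lemma Maj.congr_left {x x' y : ℝ → ℝ} (hxy : Maj x y) (h : x =ᵐ[μ₀] x') : Maj x' y := by
  have hneg : rearr (negPart' x) = rearr (negPart' x') :=
    rearr_congr_ae (h.mono fun t ht => by simp only [negPart', ht])
  refine ⟨?_, ?_, (integral_congr_ae h).symm.trans hxy.2.2⟩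
  · rw [SubMaj, ← rearr_posPart'_congr_ae h]
    exact hxy.1
  · rw [SubMaj, ← hneg]
    exact hxy.2.1

lemma measure_preimage_Ioc_pos {x : ℝ → ℝ} {a b : ℝ} (h : distrib x b < distrib x a) :
    0 < μ₀ (x ⁻¹' Ioc a b) := by
  refine pos_iff_ne_zero.2 fun h0 => h.not_ge ?_
  calc distrib x a ≤ μ₀ (x ⁻¹' Ioc a b ∪ {t | b < x t}) :=
        measure_mono fun t ht => (le_or_gt (x t) b).imp (fun h => ⟨ht, h⟩) id
    _ ≤ distrib x b := (measure_union_le _ _).trans (by rw [h0, zero_add]; rfl)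

lemma exists_pos_add_le_of_lt {F G : ℝ → ℝ} {a b : ℝ} (hab : a ≤ b)
    (hF : ContinuousOn F (Icc a b)) (hG : ContinuousOn G (Icc a b))
    (hlt : ∀ t ∈ Icc a b, F t < G t) : ∃ δ > 0, ∀ t ∈ Icc a b, F t + δ ≤ G t := by
  obtain ⟨z, hz, hmin⟩ := isCompact_Icc.exists_isMinOn (nonempty_Icc.2 hab) (hG.sub hF)
  exact ⟨G z - F z, sub_pos.2 (hlt z hz), fun t ht => by
    have := isMinOn_iff.1 hmin t ht
    simp only [Pi.sub_apply] at this
    linarith⟩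

/-- The three regimes of `t`: for `t ≤ τ` the cut-off at `t` does not see the moved levels (`hγ`),
on `[τ, T]` the gain `η m` is absorbed by the slack (`hgap`), and for `t ≥ T` the mass lowered on
`U` is exactly the mass raised on `V` (`hβT`). -/
theorem maj_transfer {x y : ℝ → ℝ} (hxm : Measurable x) (hx : Integrable x μ₀)
    (hy : Integrable y μ₀) (hxy : Maj x y) {U V : Set ℝ} (hU : MeasurableSet U)
    (hV : MeasurableSet V) (hUV : Disjoint U V) {m η β γ τ T : ℝ} (hm : 0 ≤ m) (hη : 0 < η)
    (hβ : 0 ≤ β) (hUm : μ₀ U = ENNReal.ofReal m) (hVm : μ₀ V = ENNReal.ofReal m)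
    (hrange : U ∪ V ⊆ x ⁻¹' Ioc (β + η) (γ - 2 * η))
    (hγ : ∀ a < γ, ENNReal.ofReal τ ≤ distrib x a)
    (hβT : distrib x β + ENNReal.ofReal m ≤ ENNReal.ofReal T)
    (hgap : ∀ t ∈ Icc τ T, (∫ s in Ioc 0 t, rearr (posPart' x) s) + η * m ≤
      ∫ s in Ioc 0 t, rearr (posPart' y) s) :
    Maj (transfer x U V η) y := by
  have hUlo : ∀ t ∈ U, β + η < x t := fun t ht => (hrange (Or.inl ht)).1
  have hVlo : ∀ t ∈ V, β + η < x t := fun t ht => (hrange (Or.inr ht)).1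
  have hVhi : ∀ t ∈ V, x t + 2 * η ≤ γ := fun t ht => by linarith [(hrange (Or.inr ht)).2]
  have hg : Integrable (transfer x U V η) μ₀ :=
    hx.transfer hU hV (hUm ▸ ENNReal.ofReal_ne_top) (hVm ▸ ENNReal.ofReal_ne_top)
  refine ⟨?_, ?_, (integral_transfer hx hU hV (hUm.trans hVm.symm)
    (hVm ▸ ENNReal.ofReal_ne_top)).trans hxy.2.2⟩
  · rw [subMaj_iff hg.posPart' hy.posPart']
    intro t ht
    have hxyt := (subMaj_iff hx.posPart' hy.posPart').1 hxy.1 t ht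
    rw [lintegral_min_distrib_abs_posPart'] at hxyt ⊢
    rcases le_or_gt t τ with htτ | htτ
    · exact (lintegral_min_distrib_transfer_le_of_le hUV hη.le hVhi
        fun a ha => (ENNReal.ofReal_le_ofReal htτ).trans (hγ a ha)).trans hxyt
    rcases le_or_gt t T with htT | htT
    · refine (lintegral_min_distrib_transfer_le_add hxm hU hV hUV hη.le
        (fun s hs => by linarith [hVlo s hs]) _).trans ?_
      rw [← lintegral_min_distrib_abs_posPart', ← ofReal_integral_rearr hx.posPart',
        ← ofReal_integral_rearr hy.posPart', hVm, ← ENNReal.ofReal_mul hη.le,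
        ← ENNReal.ofReal_add (setIntegral_nonneg measurableSet_Ioc fun s _ => rearr_nonneg _ s)
          (mul_nonneg hη.le hm)]
      exact ENNReal.ofReal_le_ofReal (hgap t ⟨htτ.le, htT⟩)
    · exact (lintegral_min_distrib_transfer_eq hxm hU hV hUV hη.le hβ hUlo
        (fun s hs => by linarith [hVlo s hs]) (hUm.trans hVm.symm) (hVm ▸ ENNReal.ofReal_ne_top)
        (hVm ▸ hβT.trans (ENNReal.ofReal_le_ofReal htT.le))).le.trans hxyt
  · rw [SubMaj, negPart'_transfer hUV hη.le (fun t ht => by linarith [hUlo t ht])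
      fun t ht => by linarith [hVlo t ht]]
    exact hxy.2.1

theorem exists_maj_transfer {x y : ℝ → ℝ} (hxm : Measurable x) (hx : Integrable x μ₀)
    (hy : Integrable y μ₀) (hxy : Maj x y) {s T : ℝ} (hs : 0 ≤ s) (hsT : s < T)
    (hconst : ∀ ε, 0 < ε → ∃ u ∈ Ico s (s + ε), rearr (posPart' x) u ≠ rearr (posPart' x) s)
    (hstrict : ∀ u ∈ Ioc s T,
      (∫ t in Ioc 0 u, rearr (posPart' x) t) < ∫ t in Ioc 0 u, rearr (posPart' y) t) :
    ∃ U V : Set ℝ, ∃ η : ℝ, 0 < η ∧ Disjoint U V ∧ μ₀ U ≠ 0 ∧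
      Integrable (transfer x U V η) μ₀ ∧ Maj (transfer x U V η) y ∧
      Integrable (transfer x V U η) μ₀ ∧ Maj (transfer x V U η) y := by
  have hf := hx.posPart'
  obtain ⟨τ₀, τ₁, τ₂, τ₃, hsτ₀, hτ₀₁, hτ₁₂, hτ₂₃, hτ₃T, hr₃pos, hr₂, hr₁, hr₀⟩ :=
    exists_rearr_chain hf hs hsT hconst
  have hτ₀pos : 0 < τ₀ := hs.trans_lt hsτ₀
  set r := rearr (posPart' x)
  set S := x ⁻¹' Ioc (r τ₂) (r τ₁)
  have hSpos : 0 < μ₀ S := measure_preimage_Ioc_pos <|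
    (distrib_rearr_posPart'_le hx (by linarith)).trans_lt
      ((lt_rearr_posPart'_iff hx (by linarith) (by linarith)).1 hr₁)
  obtain ⟨m, ⟨hm, hmT⟩, U, hUS, V, hVS, hU, hV, hUV, hUm, hVm⟩ :=
    exists_disjoint_subsets_measure_eq (hxm measurableSet_Ioc) hSpos (sub_pos.2 hτ₃T)
  -- the slack of `x₊ ≺≺ y₊` on `[τ₀, τ₃ + m]` bounds the height `η` of the transfer
  have hT₁ : τ₃ + m < T := by linarith
  obtain ⟨δ, hδ, hgap⟩ := exists_pos_add_le_of_lt (by linarith : τ₀ ≤ τ₃ + m)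
    ((continuousOn_integral_rearr hf (hs.trans hsT.le)).mono
      (Icc_subset_Icc hτ₀pos.le hT₁.le))
    ((continuousOn_integral_rearr hy.posPart' (hs.trans hsT.le)).mono
      (Icc_subset_Icc hτ₀pos.le hT₁.le))
    fun u hu => hstrict u ⟨hsτ₀.trans_le hu.1, hu.2.trans hT₁.le⟩
  set η := min (min ((r τ₀ - r τ₁) / 2) (r τ₂ - r τ₃)) (δ / m)
  have hη₁ : η ≤ (r τ₀ - r τ₁) / 2 := (min_le_left _ _).trans (min_le_left _ _)
  have hη₂ : η ≤ r τ₂ - r τ₃ := (min_le_left _ _).trans (min_le_right _ _)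
  have hηδ : η * m ≤ δ := by
    calc η * m ≤ δ / m * m := mul_le_mul_of_nonneg_right (min_le_right _ _) hm.le
      _ = δ := div_mul_cancel₀ δ hm.ne'
  have hη : 0 < η := lt_min (lt_min (by linarith) (by linarith)) (div_pos hδ hm)
  have hmaj : ∀ U V : Set ℝ, MeasurableSet U → MeasurableSet V → Disjoint U V →
      U ∪ V ⊆ S → μ₀ U = ENNReal.ofReal m → μ₀ V = ENNReal.ofReal m →
      Maj (transfer x U V η) y := fun U V hU hV hUV hUVS hUm hVm =>
    maj_transfer hxm hx hy hxy hU hV hUV hm.le hη hr₃pos.le hUm hVm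
      (fun t ht => ⟨by linarith [(hUVS ht).1], by linarith [(hUVS ht).2]⟩)
      (fun a ha => ((lt_rearr_posPart'_iff hx hτ₀pos (le_max_right a 0)).1
        (max_lt ha (by linarith))).le.trans (distrib_antitone x (le_max_left a 0)))
      ((add_le_add (distrib_rearr_posPart'_le hx (by linarith)) le_rfl).trans
        (ENNReal.ofReal_add (by linarith) hm.le).ge)
      fun t ht => by linarith [hgap t ht]
  have hUfin : μ₀ U ≠ ⊤ := hUm ▸ ENNReal.ofReal_ne_top
  have hVfin : μ₀ V ≠ ⊤ := hVm ▸ ENNReal.ofReal_ne_top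
  exact ⟨U, V, η, hη, hUV, by simp [hUm, hm], hx.transfer hU hV hUfin hVfin,
    hmaj U V hU hV hUV (union_subset hUS hVS) hUm hVm, hx.transfer hV hU hVfin hUfin,
    hmaj V U hV hU hUV.symm (union_subset hVS hUS) hVm hUm⟩

theorem stmt19_general (y x : ℝ → ℝ) (hy : IntegrableOn y (Set.Ioi 0))
    (hx : IntegrableOn x (Set.Ioi 0)) (hmaj : Maj x y)
    (hext : ∀ x₁ x₂ : ℝ → ℝ,
      IntegrableOn x₁ (Set.Ioi 0) → Maj x₁ y →
      IntegrableOn x₂ (Set.Ioi 0) → Maj x₂ y →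
      (∀ᵐ t ∂(volume.restrict (Set.Ioi (0:ℝ))), x t = (x₁ t + x₂ t) / 2) →
      x₁ =ᵐ[volume.restrict (Set.Ioi (0:ℝ))] x₂)
    (t₁ : ℝ) (t₂ : EReal) (ht₁ : 0 ≤ t₁)
    (hstrict : ∀ s : ℝ, t₁ < s → (s : EReal) < t₂ →
      (∫ t in Set.Ioc (0:ℝ) s, rearr (posPart' x) t) <
        ∫ t in Set.Ioc (0:ℝ) s, rearr (posPart' y) t) :
    ∀ s : ℝ, t₁ ≤ s → (s : EReal) < t₂ →
      ∃ ε : ℝ, 0 < ε ∧ ∀ u ∈ Set.Ico s (s + ε),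
        rearr (posPart' x) u = rearr (posPart' x) s := by
  intro s hs hst₂
  by_contra! hconst
  obtain ⟨T, hsT, hTt₂⟩ := EReal.lt_iff_exists_real_btwn.1 hst₂
  obtain ⟨x', hx'm, hxx'⟩ : ∃ x', Measurable x' ∧ x =ᵐ[μ₀] x' :=
    ⟨hx.aemeasurable.mk x, hx.aemeasurable.measurable_mk, hx.aemeasurable.ae_eq_mk⟩
  rw [rearr_posPart'_congr_ae hxx'] at hconst hstrict
  obtain ⟨U, V, η, hη, hUV, hU0, hint₁, hmaj₁, hint₂, hmaj₂⟩ :=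
    exists_maj_transfer hx'm (hx.congr hxx') hy (hmaj.congr_left hxx') (ht₁.trans hs)
      (EReal.coe_lt_coe_iff.1 hsT) hconst fun u hu =>
        hstrict u (hs.trans_lt hu.1) ((EReal.coe_le_coe_iff.2 hu.2).trans_lt hTt₂)
  have hae := hext _ _ hint₁ hmaj₁ hint₂ hmaj₂ <| hxx'.mono fun t ht => by
    rw [ht, transfer_add_transfer]
    ring
  refine hU0 (measure_mono_null (fun t ht => ?_) (ae_iff.1 hae))
  rw [mem_ofPred_eq, transfer_of_mem_left hUV ht, transfer_of_mem_right hUV.symm ht]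
  intro h
  linarith

/-- If `x` is an extreme point of `Ω(y)` and `∫₀ˢ μ(y₊) > ∫₀ˢ μ(x₊)` strictly on
`(t₁, t₂)` (with `t₂ ≤ ∞`, formalized via `EReal`), then `μ(x₊)` is constant on some
right neighborhood of every point of `[t₁, t₂)`; i.e. it is a step function there. -/
theorem stmt19 (y x : ℝ → ℝ) (hy : IntegrableOn y (Set.Ioi 0))
    (hx : IntegrableOn x (Set.Ioi 0)) (hmaj : Maj x y)
    (hext : ∀ x₁ x₂ : ℝ → ℝ,
      IntegrableOn x₁ (Set.Ioi 0) → Maj x₁ y →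
      IntegrableOn x₂ (Set.Ioi 0) → Maj x₂ y →
      (∀ᵐ t ∂(volume.restrict (Set.Ioi (0:ℝ))), x t = (x₁ t + x₂ t) / 2) →
      x₁ =ᵐ[volume.restrict (Set.Ioi (0:ℝ))] x₂)
    (t₁ : ℝ) (t₂ : EReal) (ht₁ : 0 ≤ t₁) (ht : (t₁ : EReal) < t₂)
    (hstrict : ∀ s : ℝ, t₁ < s → (s : EReal) < t₂ →
      (∫ t in Set.Ioc (0:ℝ) s, rearr (posPart' x) t) <
        ∫ t in Set.Ioc (0:ℝ) s, rearr (posPart' y) t) :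
    ∀ s : ℝ, t₁ ≤ s → (s : EReal) < t₂ →
      ∃ ε : ℝ, 0 < ε ∧ ∀ u ∈ Set.Ico s (s + ε),
        rearr (posPart' x) u = rearr (posPart' x) s :=
  stmt19_general y x hy hx hmaj hext t₁ t₂ ht₁ hstrict
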